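/- Let T(h) = (√2/(2(1−2k²)))·(2E(k) − K(k) + Π(2k², k)) with k = √(2+h)/2, defined for h ∈ (−2, 0). Then T is continuous and T(h) → π/√2 as h → −2⁺. -/

import Mathlib

open Real Set Filter

/-- Complete elliptic integral of the first kind. -/
noncomputable def ellipticK (k : ℝ) : ℝ :=
  ∫ t in (0 : ℝ)..1, 1 / (Real.sqrt (1 - t^2) * Real.sqrt (1 - k^2 * t^2))

/-- Complete elliptic integral of the second kind. -/
noncomputable def ellipticE (k : ℝ) : ℝ :=
  ∫ t in (0 : ℝ)..1, Real.sqrt (1 - k^2 * t^2) / Real.sqrt (1 - t^2)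

/-- Complete elliptic integral of the third kind. -/
noncomputable def ellipticPi (n k : ℝ) : ℝ :=
  ∫ t in (0 : ℝ)..1,
    1 / ((1 - n * t^2) * Real.sqrt (1 - t^2) * Real.sqrt (1 - k^2 * t^2))

/-- The period function of the circular Sitnikov problem. -/
noncomputable def sitnikovT (h : ℝ) : ℝ :=
  let k := Real.sqrt (2 + h) / 2
  (Real.sqrt 2 / (2 * (1 - 2 * k^2))) *
    (2 * ellipticE k - ellipticK k + ellipticPi (2 * k^2) k)

/-!
On `0 < t < 1` each integrand is bounded by a constant multiple of `1 / √(1 - t²)`, locally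
uniformly in the modulus `k` while `1 - 2k²t²` (hence `1 - k²t²`) stays away from `0`, that is,
for `2k² < 1`. This weight is integrable, with integral `arcsin 1 = π / 2`, so by dominated
convergence `K`, `E` and `Π(2k², k)` are continuous for `2k² < 1`, each equal to `π / 2` at
`k = 0`. The modulus `k = √(2 + h) / 2` satisfies `2k² < 1` for `h < 0` and tends to `0` as
`h → -2`, so the period tends to `(√2 / 2) (2 - 1 + 1) (π / 2) = π / √2`.
-/

open MeasureTheory Topology Interval

theorem intervalIntegrable_inv_sqrt_one_sub_sq :
    IntervalIntegrable (fun t : ℝ => (√(1 - t ^ 2))⁻¹) volume 0 1 := by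
  have h_sub : uIcc (0:ℝ) 1 ⊆ uIcc (-1) 1 := by
    rw [uIcc_of_le zero_le_one, uIcc_of_le (by norm_num)]
    exact Icc_subset_Icc (by norm_num) le_rfl
  simpa [Real.sqrt_inv] using
    Polynomial.Chebyshev.intervalIntegrable_sqrt_one_sub_sq_inv.mono_set h_sub

theorem integral_inv_sqrt_one_sub_sq : ∫ t in (0:ℝ)..1, (√(1 - t ^ 2))⁻¹ = π / 2 := by
  rw [intervalIntegral.integral_eq_sub_of_hasDerivAt_of_le zero_le_one
    continuous_arcsin.continuousOn
    (fun t ht => by simpa using hasDerivAt_arcsin (by linarith [ht.1]) ht.2.ne)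
    intervalIntegrable_inv_sqrt_one_sub_sq]
  simp

theorem continuousAt_integral_of_abs_le_div_sqrt {F : ℝ → ℝ → ℝ} {k₀ C : ℝ}
    (hF_meas : ∀ᶠ k in 𝓝 k₀, AEStronglyMeasurable (F k) (volume.restrict (Ι 0 1)))
    (h_bound : ∀ᶠ k in 𝓝 k₀, ∀ t ∈ Ioo (0:ℝ) 1, |F k t| ≤ C / √(1 - t ^ 2))
    (h_cont : ∀ t ∈ Ioo (0:ℝ) 1, ContinuousAt (fun k => F k t) k₀) :
    ContinuousAt (fun k => ∫ t in (0:ℝ)..1, F k t) k₀ := by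
  have h_Ioo : ∀ᵐ t : ℝ, t ∈ Ι (0:ℝ) 1 → t ∈ Ioo (0:ℝ) 1 := by
    filter_upwards [(Ioo_ae_eq_Ioc (a := (0:ℝ)) (b := 1)).mem_iff] with t ht
    rw [uIoc_of_le zero_le_one, ← ht]
    exact id
  refine intervalIntegral.continuousAt_of_dominated_interval hF_meas ?_
    (intervalIntegrable_inv_sqrt_one_sub_sq.const_mul C) ?_
  · filter_upwards [h_bound] with k hk
    filter_upwards [h_Ioo] with t ht ht'
    simpa [div_eq_mul_inv] using hk t (ht ht')
  · filter_upwards [h_Ioo] with t ht ht'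
    exact h_cont t (ht ht')

lemma one_sub_sq_pos_of_mem_Ioo {t : ℝ} (ht : t ∈ Ioo (0:ℝ) 1) : 0 < 1 - t ^ 2 := by
  nlinarith [ht.1, ht.2]

lemma sq_mul_sq_lt_of_mem_Ioo {k c t : ℝ} (hk : k ^ 2 < c) (ht : t ∈ Ioo (0:ℝ) 1) :
    k ^ 2 * t ^ 2 < c :=
  (mul_le_of_le_one_right (sq_nonneg k) (pow_le_one₀ ht.1.le ht.2.le)).trans_lt hk

lemma eventually_sq_lt {k₀ c : ℝ} (h : k₀ ^ 2 < c) : ∀ᶠ k in 𝓝 k₀, k ^ 2 < c :=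
  (continuous_pow 2).continuousAt.eventually (gt_mem_nhds h)

theorem continuousAt_ellipticK {k₀ : ℝ} (hk₀ : k₀ ^ 2 < 1) :
    ContinuousAt ellipticK k₀ := by
  obtain ⟨c, hk₀c, hc⟩ := exists_between hk₀
  refine continuousAt_integral_of_abs_le_div_sqrt (C := 1 / √(1 - c))
    (.of_forall fun k => (by fun_prop : Measurable _).aestronglyMeasurable) ?_ fun t ht => ?_
  · filter_upwards [eventually_sq_lt hk₀c] with k hk t ht
    have := one_sub_sq_pos_of_mem_Ioo ht
    have := sq_mul_sq_lt_of_mem_Ioo hk ht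
    have : 0 < 1 - k ^ 2 * t ^ 2 := by linarith
    have : 0 < 1 - c := by linarith
    rw [abs_of_pos (by positivity), div_div,
      one_div_le_one_div (by positivity) (by positivity), mul_comm]
    gcongr
  · have := one_sub_sq_pos_of_mem_Ioo ht
    have : 0 < 1 - k₀ ^ 2 * t ^ 2 := by linarith [sq_mul_sq_lt_of_mem_Ioo hk₀ ht]
    fun_prop (disch := positivity)

theorem continuous_ellipticE : Continuous ellipticE := by
  refine continuous_iff_continuousAt.2 fun k₀ => continuousAt_integral_of_abs_le_div_sqrt (C := 1)
    (.of_forall fun k => (by fun_prop : Measurable _).aestronglyMeasurable)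
    (.of_forall fun k t _ => ?_) fun t _ => by fun_prop
  rw [abs_of_nonneg (by positivity)]
  gcongr
  exact sqrt_le_one.2 (by nlinarith)

theorem continuousAt_ellipticPi_two_mul_sq {k₀ : ℝ} (hk₀ : 2 * k₀ ^ 2 < 1) :
    ContinuousAt (fun k => ellipticPi (2 * k ^ 2) k) k₀ := by
  obtain ⟨c, hk₀c, hc⟩ := exists_between (lt_div_iff₀' two_pos |>.2 hk₀)
  refine continuousAt_integral_of_abs_le_div_sqrt (C := 1 / ((1 - 2 * c) * √(1 - c)))
    (.of_forall fun k => (by fun_prop : Measurable _).aestronglyMeasurable) ?_ fun t ht => ?_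
  · filter_upwards [eventually_sq_lt hk₀c] with k hk t ht
    have := one_sub_sq_pos_of_mem_Ioo ht
    have := sq_mul_sq_lt_of_mem_Ioo hk ht
    have : 0 < 1 - 2 * c := by linarith
    have : 0 < 1 - c := by linarith
    have : 0 < 1 - 2 * k ^ 2 * t ^ 2 := by linarith
    have : 0 < 1 - k ^ 2 * t ^ 2 := by linarith
    rw [abs_of_pos (by positivity), div_div,
      one_div_le_one_div (by positivity) (by positivity), mul_right_comm]
    gcongr ?_ * _ * √?_ <;> linarith
  · have := one_sub_sq_pos_of_mem_Ioo ht
    have := sq_mul_sq_lt_of_mem_Ioo hk₀c ht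
    have : 0 < 1 - 2 * k₀ ^ 2 * t ^ 2 := by linarith
    have : 0 < 1 - k₀ ^ 2 * t ^ 2 := by linarith
    fun_prop (disch := positivity)

theorem ellipticK_zero : ellipticK 0 = π / 2 := by
  simpa [ellipticK] using integral_inv_sqrt_one_sub_sq

theorem ellipticE_zero : ellipticE 0 = π / 2 := by
  simpa [ellipticE] using integral_inv_sqrt_one_sub_sq

theorem ellipticPi_zero_zero : ellipticPi 0 0 = π / 2 := by
  simpa [ellipticPi] using integral_inv_sqrt_one_sub_sq

noncomputable def sitnikovPeriodOfModulus (k : ℝ) : ℝ :=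
  √2 / (2 * (1 - 2 * k ^ 2)) * (2 * ellipticE k - ellipticK k + ellipticPi (2 * k ^ 2) k)

theorem sitnikovT_eq_comp : sitnikovT = sitnikovPeriodOfModulus ∘ fun h => √(2 + h) / 2 := rfl

theorem continuousAt_sitnikovPeriodOfModulus {k₀ : ℝ} (hk₀ : 2 * k₀ ^ 2 < 1) :
    ContinuousAt sitnikovPeriodOfModulus k₀ := by
  have hK := continuousAt_ellipticK (k₀ := k₀) (by linarith [sq_nonneg k₀])
  have hE := continuous_ellipticE.continuousAt (x := k₀)
  have hPi := continuousAt_ellipticPi_two_mul_sq hk₀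
  exact (continuousAt_const.div (by fun_prop) (by linarith)).mul (((hE.const_mul 2).sub hK).add hPi)

theorem sitnikovPeriodOfModulus_zero : sitnikovPeriodOfModulus 0 = π / √2 := by
  norm_num [sitnikovPeriodOfModulus, ellipticK_zero, ellipticE_zero, ellipticPi_zero_zero]
  field_simp
  exact sq_sqrt zero_le_two

theorem stmt_9 :
    ContinuousOn sitnikovT (Ioo (-2 : ℝ) 0) ∧
    Tendsto sitnikovT (nhdsWithin (-2 : ℝ) (Ioi (-2 : ℝ)))
      (nhds (π / Real.sqrt 2)) := by
  have h_modulus : Continuous fun h : ℝ => √(2 + h) / 2 := by fun_prop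
  rw [sitnikovT_eq_comp]
  constructor
  · intro h hh
    refine ((continuousAt_sitnikovPeriodOfModulus ?_).comp
      h_modulus.continuousAt).continuousWithinAt
    rw [div_pow, sq_sqrt (by linarith [hh.1])]
    linarith [hh.2]
  · have h_lim : Tendsto (fun h : ℝ => √(2 + h) / 2) (𝓝[>] (-2)) (𝓝 0) := by
      simpa using (h_modulus.tendsto (-2)).mono_left nhdsWithin_le_nhds
    simpa [sitnikovPeriodOfModulus_zero] using
      (continuousAt_sitnikovPeriodOfModulus (by norm_num)).tendsto.comp h_lim
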